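/- Inequality A, lower bound: Let a_1, a_2, … be positive integers and let k ≥ 2 satisfy gcd(a_1,…,a_k) = 1. Then for every natural number n with n ≥ s^-_k, the denumerant satisfies D^a_k(n) ≥ (n − s^-_k)^{k−1} / ((k−1)! · a_1 a_2 ⋯ a_k), as an inequality of rational numbers. -/

import Mathlib

/-- The denumerant: number of tuples `(x 1, …, x k)` of naturals with
`a 1 * x 1 + ⋯ + a k * x k = n`. -/
noncomputable def D (a : ℕ → ℕ) (k n : ℕ) : ℕ :=
  {x : Fin k → ℕ | ∑ i, a (i.1 + 1) * x i = n}.ncard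

/-- The cumulative denumerant: number of tuples with
`a 1 * x 1 + ⋯ + a k * x k ≤ n`. -/
noncomputable def Dhat (a : ℕ → ℕ) (k n : ℕ) : ℕ :=
  {x : Fin k → ℕ | ∑ i, a (i.1 + 1) * x i ≤ n}.ncard

/-- `gcdUpTo a i = gcd (a 1, …, a i)`. -/
def gcdUpTo (a : ℕ → ℕ) (i : ℕ) : ℕ := (Finset.Icc 1 i).gcd a

/-- The sequence `s⁺` of rationals. -/
def sPlus (a : ℕ → ℕ) : ℕ → ℚ
  | 0 => 0
  | 1 => (a 1 * a 2 : ℚ) / (2 * gcdUpTo a 2)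
  | i + 2 => sPlus a (i + 1) + ((gcdUpTo a (i + 1) : ℚ) / (2 * gcdUpTo a (i + 2))) * a (i + 2)

/-- The sequence `s⁻` of integers. -/
def sMinus (a : ℕ → ℕ) : ℕ → ℤ
  | 0 => 0
  | 1 => -(a 1 : ℤ)
  | i + 2 => sMinus a (i + 1) +
      (((gcdUpTo a (i + 1) / gcdUpTo a (i + 2) : ℕ) : ℤ) - 1) * (a (i + 2) : ℤ)

/-- Auxiliary recursion for the Blom–Fröberg number, with `m : ℕ`. -/
def bfAux (a : ℕ → ℕ) (r : ℕ) : ℕ → ℤ → ℚ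
  | 0, l => if l = 0 then 1 else 0
  | m + 1, l =>
      if l < 0 ∨ (m + 1 : ℤ) < l then 0
      else bfAux a r m l + (a (m + 1 + r) : ℚ) / 2 * bfAux a r m (l - 1)

/-- The Blom–Fröberg number `[m ℓ]^a_r`. -/
def bf (a : ℕ → ℕ) (r : ℕ) (m l : ℤ) : ℚ :=
  if m < 0 then 0 else bfAux a r m.toNat l

/-! ### Auxiliary lemmas on `gcdUpTo` -/

lemma icc_succ (k : ℕ) : Finset.Icc 1 (k+1) = insert (k+1) (Finset.Icc 1 k) := by
  ext x; simp only [Finset.mem_Icc, Finset.mem_insert]; omega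

lemma gcdUpTo_succ (a : ℕ → ℕ) (k : ℕ) :
    gcdUpTo a (k+1) = Nat.gcd (a (k+1)) (gcdUpTo a k) := by
  unfold gcdUpTo; rw [icc_succ, Finset.gcd_insert]; rfl

lemma gcdUpTo_one (a : ℕ → ℕ) : gcdUpTo a 1 = a 1 := by
  unfold gcdUpTo; rw [Finset.Icc_self]; simp [Finset.gcd_singleton]

lemma gcdUpTo_dvd (a : ℕ → ℕ) {i k : ℕ} (h1 : 1 ≤ i) (h2 : i ≤ k) : gcdUpTo a k ∣ a i :=
  Finset.gcd_dvd (by simp only [Finset.mem_Icc]; omega)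

lemma gcdUpTo_dvd_gcdUpTo (a : ℕ → ℕ) {i k : ℕ} (h : i ≤ k) : gcdUpTo a k ∣ gcdUpTo a i :=
  Finset.dvd_gcd fun j hj => by
    simp only [Finset.mem_Icc] at hj
    exact gcdUpTo_dvd a hj.1 (le_trans hj.2 h)

lemma gcdUpTo_pos (a : ℕ → ℕ) (ha : 1 ≤ a 1) {k : ℕ} (hk : 1 ≤ k) : 0 < gcdUpTo a k :=
  Nat.pos_of_dvd_of_pos (gcdUpTo_dvd a le_rfl hk) ha

lemma gcdUpTo_scale (a a' : ℕ → ℕ) (d : ℕ) {k i : ℕ} (hik : i ≤ k)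
    (hsc : ∀ j, 1 ≤ j → j ≤ k → a j = d * a' j) :
    gcdUpTo a i = d * gcdUpTo a' i := by
  unfold gcdUpTo
  have h : ∀ j ∈ Finset.Icc 1 i, a j = d * a' j := fun j hj => by
    simp only [Finset.mem_Icc] at hj; exact hsc j hj.1 (le_trans hj.2 hik)
  rw [Finset.gcd_congr rfl h, Finset.gcd_mul_left]; simp

/-! ### Auxiliary lemmas on `sMinus` -/

lemma sMinus_scale (a a' : ℕ → ℕ) (d : ℕ) (hd : 0 < d) :
    ∀ k, (∀ j, 1 ≤ j → j ≤ k → a j = d * a' j) → sMinus a k = d * sMinus a' k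
  | 0, _ => by simp [sMinus]
  | 1, h => by rw [sMinus, sMinus, h 1 le_rfl le_rfl]; push_cast; ring
  | (i+2), h => by
    have IH := sMinus_scale a a' d hd (i+1) (fun j h1 h2 => h j h1 (by omega))
    have g1 : gcdUpTo a (i+1) = d * gcdUpTo a' (i+1) :=
      gcdUpTo_scale a a' d (by omega : i+1 ≤ i+2) h
    have g2 : gcdUpTo a (i+2) = d * gcdUpTo a' (i+2) :=
      gcdUpTo_scale a a' d le_rfl h
    rw [sMinus, sMinus, IH, g1, g2, Nat.mul_div_mul_left _ _ hd, h (i+2) (by omega) le_rfl]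
    push_cast; ring

lemma neg_gcd_le_sMinus (a : ℕ → ℕ) (ha : ∀ i, 1 ≤ a i) :
    ∀ k, 1 ≤ k → -(gcdUpTo a k : ℤ) ≤ sMinus a k
  | 0, h => by omega
  | 1, _ => by rw [sMinus, gcdUpTo_one]
  | (i+2), _ => by
    have IH := neg_gcd_le_sMinus a ha (i+1) (by omega)
    have hg1 : 0 < gcdUpTo a (i+1) := gcdUpTo_pos a (ha 1) (by omega)
    have hg2 : 0 < gcdUpTo a (i+2) := gcdUpTo_pos a (ha 1) (by omega)
    have hdvd : gcdUpTo a (i+2) ∣ gcdUpTo a (i+1) := gcdUpTo_dvd_gcdUpTo a (by omega)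
    have hda : gcdUpTo a (i+2) ∣ a (i+2) := gcdUpTo_dvd a (by omega) le_rfl
    have hq : gcdUpTo a (i+1) / gcdUpTo a (i+2) * gcdUpTo a (i+2) = gcdUpTo a (i+1) :=
      Nat.div_mul_cancel hdvd
    have hqge : 1 ≤ gcdUpTo a (i+1) / gcdUpTo a (i+2) :=
      (Nat.one_le_div_iff hg2).mpr (Nat.le_of_dvd hg1 hdvd)
    have hab : gcdUpTo a (i+2) ≤ a (i+2) := Nat.le_of_dvd (ha (i+2)) hda
    rw [sMinus]
    have hQB : ((gcdUpTo a (i+1) / gcdUpTo a (i+2) : ℕ) : ℤ) * (gcdUpTo a (i+2) : ℤ)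
        = (gcdUpTo a (i+1) : ℤ) := by exact_mod_cast hq
    have hQ1 : (1:ℤ) ≤ ((gcdUpTo a (i+1) / gcdUpTo a (i+2) : ℕ) : ℤ) := by exact_mod_cast hqge
    have hBC : (gcdUpTo a (i+2) : ℤ) ≤ (a (i+2) : ℤ) := by exact_mod_cast hab
    nlinarith [mul_le_mul_of_nonneg_left hBC
      (by linarith : (0:ℤ) ≤ ((gcdUpTo a (i+1) / gcdUpTo a (i+2) : ℕ) : ℤ) - 1)]

/-! ### Counting lemmas for `D` -/

def sumW (a : ℕ → ℕ) (k : ℕ) (x : Fin k → ℕ) : ℕ := ∑ i, a (i.1 + 1) * x i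

lemma D_def (a : ℕ → ℕ) (k n : ℕ) : D a k n = {x : Fin k → ℕ | sumW a k x = n}.ncard := rfl

def box (k n : ℕ) : Finset (Fin k → ℕ) := Fintype.piFinset (fun _ => Finset.range (n+1))

lemma sum_split (a : ℕ → ℕ) (k : ℕ) (x : Fin (k+1) → ℕ) :
    sumW a (k+1) x = sumW a k (Fin.init x) + a (k+1) * x (Fin.last k) := by
  rw [sumW, Fin.sum_univ_castSucc]; rfl

lemma coord_le_sum (a : ℕ → ℕ) (ha : ∀ i, 1 ≤ a i) (k : ℕ) (x : Fin k → ℕ) (i : Fin k) :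
    x i ≤ sumW a k x := by
  have h1 : a (i.1+1) * x i ≤ sumW a k x :=
    Finset.single_le_sum (f := fun i : Fin k => a (i.1+1) * x i)
      (fun j _ => Nat.zero_le _) (Finset.mem_univ i)
  have h2 : x i ≤ a (i.1+1) * x i := Nat.le_mul_of_pos_left _ (ha _)
  omega

lemma D_eq_card (a : ℕ → ℕ) (ha : ∀ i, 1 ≤ a i) (k : ℕ) {s m : ℕ} (hsm : s ≤ m) :
    D a k s = ((box k m).filter (fun x => sumW a k x = s)).card := by
  rw [D_def, ← Set.ncard_coe_finset]
  congr 1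
  ext x
  simp only [Set.mem_setOf_eq, Finset.coe_filter, box, Fintype.mem_piFinset, Finset.mem_range]
  constructor
  · intro h
    refine ⟨fun i => ?_, h⟩
    have := coord_le_sum a ha k x i
    omega
  · exact And.right

lemma D_succ (a : ℕ → ℕ) (ha : ∀ i, 1 ≤ a i) (k n : ℕ) :
    D a (k+1) n = ∑ v ∈ Finset.range (n+1),
      if a (k+1) * v ≤ n then D a k (n - a (k+1) * v) else 0 := by
  rw [D_eq_card a ha (k+1) (le_refl n)]
  rw [Finset.card_eq_sum_card_fiberwise (f := fun x => x (Fin.last k))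
    (t := Finset.range (n+1)) ?hmem]
  case hmem =>
    intro x hx
    simp only [Finset.mem_coe, Finset.mem_filter, box, Fintype.mem_piFinset, Finset.mem_range] at hx ⊢
    exact hx.1 _
  refine Finset.sum_congr rfl fun v hv => ?_
  rw [Finset.filter_filter]
  by_cases hbv : a (k+1) * v ≤ n
  · rw [if_pos hbv, D_eq_card a ha k (Nat.sub_le n _)]
    refine Finset.card_bij' (fun x _ => Fin.init x) (fun y _ => Fin.snoc y v) ?_ ?_ ?_ ?_
    · -- hi : init x ∈ t
      intro x hx
      simp only [Finset.mem_filter, box, Fintype.mem_piFinset, Finset.mem_range] at hx ⊢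
      have hbox := hx.1
      have hsum := hx.2.1
      have hlast := hx.2.2
      have hsplit := sum_split a k x
      have hsum' : sumW a k (Fin.init x) = n - a (k+1) * v := by
        rw [hlast] at hsplit; omega
      refine ⟨fun i => ?_, hsum'⟩
      have := coord_le_sum a ha k (Fin.init x) i
      omega
    · -- hj : snoc y v ∈ s
      intro y hy
      simp only [Finset.mem_filter, box, Fintype.mem_piFinset, Finset.mem_range] at hy ⊢
      have hbox := hy.1
      have hsum := hy.2
      have hv : v ≤ n := le_trans (Nat.le_mul_of_pos_left _ (ha (k+1))) hbv
      have hsplit := sum_split a k (Fin.snoc y v)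
      rw [Fin.init_snoc, Fin.snoc_last, hsum] at hsplit
      refine ⟨fun i => ?_, by omega, Fin.snoc_last _ _⟩
      induction i using Fin.lastCases with
      | last => rw [Fin.snoc_last]; omega
      | cast i =>
        rw [Fin.snoc_castSucc]
        have := hbox i
        omega
    · -- left inverse
      intro x hx
      simp only [Finset.mem_filter] at hx
      show Fin.snoc (Fin.init x) v = x
      funext i
      induction i using Fin.lastCases with
      | last => rw [Fin.snoc_last, ← hx.2.2]
      | cast i => rw [Fin.snoc_castSucc]; rfl
    · -- right inverse
      intro y _
      exact Fin.init_snoc (α := fun _ : Fin (k+1) => ℕ) v y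
  · rw [if_neg hbv, Finset.card_eq_zero]
    ext x
    simp only [Finset.mem_filter, Finset.notMem_empty, iff_false, not_and]
    intro hbox hsum
    intro hlast
    apply hbv
    have hsplit := sum_split a k x
    rw [hlast] at hsplit
    omega

lemma D_scale (a a' : ℕ → ℕ) (d : ℕ) (hd : 0 < d) (k : ℕ)
    (hsc : ∀ j, 1 ≤ j → j ≤ k → a j = d * a' j) (m : ℕ) :
    D a k (d * m) = D a' k m := by
  rw [D_def, D_def]
  congr 1
  ext x
  simp only [Set.mem_setOf_eq]
  have hs : sumW a k x = d * sumW a' k x := by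
    rw [sumW, sumW, Finset.mul_sum]
    exact Finset.sum_congr rfl fun i _ => by
      rw [hsc (i.1+1) (by omega) i.isLt, mul_assoc]
  rw [hs]
  exact ⟨fun h => Nat.eq_of_mul_eq_mul_left hd h, fun h => by rw [h]⟩

lemma D_one (a : ℕ → ℕ) (h1 : a 1 = 1) (n : ℕ) : D a 1 n = 1 := by
  rw [D_def]
  have : {x : Fin 1 → ℕ | sumW a 1 x = n} = {fun _ => n} := by
    ext x
    simp only [Set.mem_setOf_eq, Set.mem_singleton_iff, sumW, Fin.sum_univ_one]
    rw [show ((0 : Fin 1).1 + 1) = 1 from rfl, h1, one_mul]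
    constructor
    · intro h; funext i; rw [Fin.eq_zero i, h]
    · intro h; rw [h]
  rw [this, Set.ncard_singleton]

/-! ### Telescoping inequality -/

lemma pow_sub_pow_le_aux (u v : ℚ) (hv : 0 ≤ v) (huv : v ≤ u) :
    ∀ K : ℕ, 1 ≤ K → u ^ K - v ^ K ≤ K * (u - v) * u ^ (K - 1) := by
  intro K hK
  induction K, hK using Nat.le_induction with
  | base => simp
  | succ K hK IH =>
    have hu : 0 ≤ u := le_trans hv huv
    have hpow : u * u ^ (K - 1) = u ^ K := by
      rw [← pow_succ']; congr 1; omega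
    have h1 : u * (u ^ K - v ^ K) ≤ u * ((K : ℚ) * (u - v) * u ^ (K - 1)) :=
      mul_le_mul_of_nonneg_left IH hu
    have h3 : v ^ K * (u - v) ≤ u ^ K * (u - v) :=
      mul_le_mul_of_nonneg_right (pow_le_pow_left₀ hv huv K) (by linarith)
    have e : u ^ (K+1) - v ^ (K+1) = u * (u ^ K - v ^ K) + v ^ K * (u - v) := by ring
    have e2 : u * ((K : ℚ) * (u - v) * u ^ (K - 1)) = (K : ℚ) * (u - v) * u ^ K := by
      rw [show u * ((K:ℚ) * (u - v) * u ^ (K-1)) = (K:ℚ) * (u-v) * (u * u^(K-1)) by ring, hpow]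
    have e3 : ((K:ℚ)+1) * (u - v) * u ^ (K+1-1) = (K:ℚ) * (u-v) * u^K + u^K * (u-v) := by
      rw [show K+1-1 = K from rfl]; ring
    push_cast
    linarith [h1, h3, e, e2, e3]

lemma tele (K bb : ℕ) (hK : 1 ≤ K) (hb : 1 ≤ bb) (c : ℚ) (T : ℕ)
    (h0 : ∀ t : ℕ, t ≤ T → 0 ≤ c - bb * t)
    (hT : c - bb * ((T : ℚ) + 1) ≤ 0) :
    c ^ K / ((K : ℚ) * bb) ≤ ∑ t ∈ Finset.range (T + 1), (c - bb * t) ^ (K - 1) := by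
  have hK0 : (0:ℚ) < K := by exact_mod_cast Nat.lt_of_lt_of_le Nat.zero_lt_one hK
  have hb0 : (0:ℚ) < bb := by exact_mod_cast Nat.lt_of_lt_of_le Nat.zero_lt_one hb
  have hKb : (0 : ℚ) < (K : ℚ) * bb := mul_pos hK0 hb0
  rw [div_le_iff₀ hKb]
  set f : ℕ → ℚ := fun t => (max (c - bb * t) 0) ^ K with hf
  have key : ∀ t ∈ Finset.range (T+1), f t - f (t+1) ≤ (c - bb * t) ^ (K-1) * ((K:ℚ) * bb) := by
    intro t ht
    rw [Finset.mem_range] at ht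
    have htT : t ≤ T := by omega
    have hu : 0 ≤ c - bb * t := h0 t htT
    have hft : f t = (c - bb*t) ^ K := by rw [hf]; simp only [max_eq_left hu]
    have hft1 : f (t+1) = (max (c - bb*((t:ℚ)+1)) 0) ^ K := by rw [hf]; push_cast; ring_nf
    have hv0 : (0:ℚ) ≤ max (c - bb*((t:ℚ)+1)) 0 := le_max_right _ _
    have hvu : max (c - bb*((t:ℚ)+1)) 0 ≤ c - bb*t := by
      apply max_le _ hu
      nlinarith
    have husub : (c - bb*t) - max (c - bb*((t:ℚ)+1)) 0 ≤ bb := by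
      have h1 : c - bb*((t:ℚ)+1) ≤ max (c - bb*((t:ℚ)+1)) 0 := le_max_left _ _
      nlinarith
    have hmain := pow_sub_pow_le_aux (c - bb*t) (max (c - bb*((t:ℚ)+1)) 0) hv0 hvu K hK
    rw [hft, hft1]
    have hupow : (0:ℚ) ≤ (c - bb*t) ^ (K-1) := pow_nonneg hu _
    nlinarith [mul_le_mul_of_nonneg_left husub
      (by positivity : (0:ℚ) ≤ (K:ℚ) * (c - bb*t)^(K-1))]
  have tsum : ∑ t ∈ Finset.range (T+1), (f t - f (t+1)) = f 0 - f (T+1) :=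
    Finset.sum_range_sub' f (T+1)
  have hc0 : 0 ≤ c := by have := h0 0 (Nat.zero_le _); simpa using this
  have hf0 : f 0 = c ^ K := by rw [hf]; simp [max_eq_left hc0]
  have hfT : f (T+1) = 0 := by
    rw [hf]
    have : max (c - bb*((T+1:ℕ):ℚ)) 0 = 0 := by
      apply max_eq_right
      push_cast
      linarith
    show ((c - ↑bb * ↑(T+1)) ⊔ 0) ^ K = 0
    rw [this]
    exact zero_pow (by omega)
  calc c ^ K = ∑ t ∈ Finset.range (T+1), (f t - f (t+1)) := by rw [tsum, hf0, hfT, sub_zero]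
    _ ≤ ∑ t ∈ Finset.range (T+1), (c - bb*t) ^ (K-1) * ((K:ℚ) * bb) := Finset.sum_le_sum key
    _ = (∑ t ∈ Finset.range (T+1), (c - bb*t) ^ (K-1)) * ((K:ℚ) * bb) := by
        rw [Finset.sum_mul]

/-! ### Main induction -/

set_option maxHeartbeats 2000000 in
lemma main_aux : ∀ k : ℕ, 1 ≤ k → ∀ a : ℕ → ℕ, (∀ i, 1 ≤ a i) → gcdUpTo a k = 1 →
    ∀ n : ℕ, sMinus a k ≤ (n : ℤ) →
    ((n : ℚ) - (sMinus a k : ℚ)) ^ (k - 1) /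
      ((Nat.factorial (k - 1) : ℚ) * ∏ i ∈ Finset.Icc 1 k, (a i : ℚ)) ≤ (D a k n : ℚ) := by
  intro k hk
  induction k, hk using Nat.le_induction with
  | base =>
    intro a ha hgcd n hn
    have h1 : a 1 = 1 := by rw [← gcdUpTo_one a]; exact hgcd
    rw [D_one a h1 n]
    norm_num [Finset.Icc_self, h1, Nat.factorial]
  | succ k hk IH =>
    intro a ha hgcd n hn
    obtain ⟨m, rfl⟩ : ∃ m, k = m + 1 := ⟨k - 1, by omega⟩
    -- Notation: d = gcd(a 1, ..., a (m+1)),  b = a (m+2)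
    have hb1 : 1 ≤ a (m+2) := ha (m+2)
    have hd : 0 < gcdUpTo a (m+1) := gcdUpTo_pos a (ha 1) (by omega)
    have hco : Nat.Coprime (a (m+2)) (gcdUpTo a (m+1)) := by
      have h := gcdUpTo_succ a (m+1)
      rw [hgcd] at h
      exact h.symm
    -- scaled sequence a'
    set d := gcdUpTo a (m+1) with hd_def
    set a' : ℕ → ℕ := fun j => if 1 ≤ j ∧ j ≤ m+1 then a j / d else a j with ha'_def
    have hsc : ∀ j, 1 ≤ j → j ≤ m+1 → a j = d * a' j := by
      intro j h1 h2
      have hdvd : d ∣ a j := gcdUpTo_dvd a h1 h2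
      rw [ha'_def]
      simp only [h1, h2, and_self, if_pos]
      exact (Nat.mul_div_cancel' hdvd).symm
    have ha' : ∀ i, 1 ≤ a' i := by
      intro i
      rw [ha'_def]
      dsimp only
      split
      · rename_i h
        exact Nat.div_pos (Nat.le_of_dvd (ha i) (gcdUpTo_dvd a h.1 h.2)) hd
      · exact ha i
    have hgcd' : gcdUpTo a' (m+1) = 1 := by
      have h := gcdUpTo_scale a a' d (le_refl (m+1)) hsc
      rw [← hd_def] at h
      have h2 : d * 1 = d * gcdUpTo a' (m+1) := by rw [mul_one, ← h]
      exact (Nat.eq_of_mul_eq_mul_left hd h2).symm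
    have hs'1 : -1 ≤ sMinus a' (m+1) := by
      have h := neg_gcd_le_sMinus a' ha' (m+1) (by omega)
      rw [hgcd'] at h
      exact_mod_cast h
    have hsk : sMinus a (m+1) = (d : ℤ) * sMinus a' (m+1) := sMinus_scale a a' d hd (m+1) hsc
    have hsk1 : sMinus a (m+1+1) = (d:ℤ) * sMinus a' (m+1) + ((d:ℤ) - 1) * (a (m+2) : ℤ) := by
      show sMinus a (m+2) = _
      rw [sMinus, hgcd, Nat.div_one, hsk]
    -- the residue x0
    haveI : NeZero d := ⟨hd.ne'⟩
    set x0 : ℕ := ((n : ZMod d) * ((a (m+2) : ZMod d))⁻¹).val with hx0_def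
    have hx0lt : x0 < d := ZMod.val_lt _
    have hcong : (a (m+2) * x0) % d = n % d := by
      have h : ((a (m+2) * x0 : ℕ) : ZMod d) = ((n : ℕ) : ZMod d) := by
        push_cast
        rw [hx0_def, ZMod.natCast_zmod_val]
        rw [show ((a (m+2)):ZMod d) * ((n : ZMod d) * ((a (m+2)):ZMod d)⁻¹)
          = (((a (m+2)):ZMod d) * ((a (m+2)):ZMod d)⁻¹) * (n : ZMod d) by ring]
        rw [ZMod.coe_mul_inv_eq_one _ hco, one_mul]
      exact (ZMod.natCast_eq_natCast_iff' _ _ _).mp h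
    -- positivity of denominators
    have hprod_pos : (0:ℚ) < ∏ i ∈ Finset.Icc 1 (m+1+1), (a i : ℚ) :=
      Finset.prod_pos (fun i _ => by exact_mod_cast Nat.lt_of_lt_of_le Nat.zero_lt_one (ha i))
    have hprod_pos' : (0:ℚ) < ∏ i ∈ Finset.Icc 1 (m+1), (a' i : ℚ) :=
      Finset.prod_pos (fun i _ => by exact_mod_cast Nat.lt_of_lt_of_le Nat.zero_lt_one (ha' i))
    have hfac_pos : (0:ℚ) < (Nat.factorial (m+1) : ℚ) := by
      exact_mod_cast Nat.factorial_pos (m+1)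
    have hfac_pos' : (0:ℚ) < (Nat.factorial m : ℚ) := by
      exact_mod_cast Nat.factorial_pos m
    -- helper for degenerate cases: if n = sMinus a (m+2) we are done
    have degenerate : (n:ℤ) ≤ sMinus a (m+1+1) →
        ((n : ℚ) - (sMinus a (m+1+1) : ℚ)) ^ (m+1+1 - 1) /
          ((Nat.factorial (m+1+1 - 1) : ℚ) * ∏ i ∈ Finset.Icc 1 (m+1+1), (a i : ℚ))
          ≤ (D a (m+1+1) n : ℚ) := by
      intro hle
      have hEq : (n:ℤ) = sMinus a (m+1+1) := le_antisymm hle hn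
      have hzero : ((n:ℚ) - (sMinus a (m+1+1) : ℚ)) = 0 := by
        rw [← hEq]; push_cast; ring
      rw [hzero, zero_pow (by omega : m+1+1-1 ≠ 0), zero_div]
      exact Nat.cast_nonneg _
    by_cases hble : a (m+2) * x0 ≤ n
    · -- main case: b * x0 ≤ n
      have hdvd0 : d ∣ n - a (m+2) * x0 := (Nat.modEq_iff_dvd' hble).mp hcong
      set m0 : ℕ := (n - a (m+2) * x0) / d with hm0_def
      have hm0 : a (m+2) * x0 + d * m0 = n := by
        have h : d * m0 = n - a (m+2) * x0 := by
          rw [hm0_def]; exact Nat.mul_div_cancel' hdvd0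
        omega
      set σ : ℕ := (sMinus a' (m+1)).toNat with hσ_def
      have hσ1 : (σ:ℤ) ≤ sMinus a' (m+1) + 1 := by omega
      have hσ2 : sMinus a' (m+1) ≤ (σ:ℤ) := Int.self_le_toNat _
      by_cases hm0σ : σ ≤ m0
      · -- main subcase
        set T : ℕ := (m0 - σ) / (a (m+2)) with hT_def
        have hdm : a (m+2) * T + (m0 - σ) % (a (m+2)) = m0 - σ := by
          rw [hT_def]; exact Nat.div_add_mod _ _
        have hmodlt : (m0 - σ) % (a (m+2)) < a (m+2) := Nat.mod_lt _ (by omega)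
        have hbtle : ∀ t, t ≤ T → a (m+2) * t ≤ m0 - σ := by
          intro t ht
          calc a (m+2) * t ≤ a (m+2) * T := Nat.mul_le_mul_left _ ht
          _ ≤ m0 - σ := by omega
        have hkey : ∀ t, t ≤ T →
            a (m+2) * (x0 + d*t) ≤ n ∧ n - a (m+2) * (x0 + d*t) = d * (m0 - a (m+2)*t) := by
          intro t ht
          have h1 : a (m+2) * t ≤ m0 - σ := hbtle t ht
          have h2 : a (m+2) * t ≤ m0 := by omega
          have e1 : a (m+2) * (x0 + d*t) = a (m+2)*x0 + d*(a (m+2)*t) := by ring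
          have e2 : d * (m0 - a (m+2)*t) + d*(a (m+2)*t) = d * m0 := by
            rw [← Nat.mul_add]; congr 1; omega
          have e3 : d*(a (m+2)*t) ≤ d*m0 := Nat.mul_le_mul_left d h2
          omega
        -- step 1: natural-number lower bound on the denumerant
        have step1 : ∑ t ∈ Finset.range (T+1), D a' (m+1) (m0 - a (m+2)*t)
            ≤ D a (m+1+1) n := by
          rw [D_succ a ha (m+1) n]
          have hinj : ∀ t ∈ Finset.range (T+1), ∀ t' ∈ Finset.range (T+1),
              x0 + d*t = x0 + d*t' → t = t' := by
            intro t _ t' _ h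
            exact Nat.eq_of_mul_eq_mul_left hd (by omega)
          have himg : Finset.image (fun t => x0 + d*t) (Finset.range (T+1))
              ⊆ Finset.range (n+1) := by
            intro v hv
            simp only [Finset.mem_image, Finset.mem_range] at hv ⊢
            obtain ⟨t, ht, rfl⟩ := hv
            have h1 := (hkey t (by omega)).1
            have h2 : x0 + d*t ≤ a (m+2)*(x0+d*t) := Nat.le_mul_of_pos_left _ hb1
            omega
          calc ∑ t ∈ Finset.range (T+1), D a' (m+1) (m0 - a (m+2)*t)
              = ∑ v ∈ Finset.image (fun t => x0 + d*t) (Finset.range (T+1)),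
                  (if a (m+2)*v ≤ n then D a (m+1) (n - a (m+2)*v) else 0) := by
                rw [Finset.sum_image hinj]
                refine (Finset.sum_congr rfl fun t ht => ?_).symm
                rw [Finset.mem_range] at ht
                obtain ⟨h1, h2⟩ := hkey t (by omega)
                rw [if_pos h1, h2, D_scale a a' d hd (m+1) hsc]
            _ ≤ ∑ v ∈ Finset.range (n+1),
                  (if a (m+2)*v ≤ n then D a (m+1) (n - a (m+2)*v) else 0) :=
                Finset.sum_le_sum_of_subset himg
        -- step 2: rational bound via IH
        set c : ℚ := (m0 : ℚ) - (sMinus a' (m+1) : ℚ) with hc_def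
        have hcast : ∀ t, t ≤ T →
            ((m0 - a (m+2)*t : ℕ) : ℚ) - (sMinus a' (m+1) : ℚ) = c - (a (m+2):ℚ)*t := by
          intro t ht
          have h2 : a (m+2)*t ≤ m0 := by have := hbtle t ht; omega
          rw [Nat.cast_sub h2, hc_def]
          push_cast
          ring
        have hM : ∀ t, t ≤ T → sMinus a' (m+1) ≤ ((m0 - a (m+2)*t : ℕ) : ℤ) := by
          intro t ht
          have h1 := hbtle t ht
          omega
        have chain1 : (∑ t ∈ Finset.range (T+1), (c - (a (m+2):ℚ)*t)^m) /
            ((Nat.factorial m : ℚ) * ∏ i ∈ Finset.Icc 1 (m+1), (a' i : ℚ))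
            ≤ (D a (m+1+1) n : ℚ) := by
          rw [Finset.sum_div]
          have h1 : ∀ t ∈ Finset.range (T+1),
              (c - (a (m+2):ℚ)*t)^m /
                ((Nat.factorial m : ℚ) * ∏ i ∈ Finset.Icc 1 (m+1), (a' i : ℚ))
              ≤ (D a' (m+1) (m0 - a (m+2)*t) : ℚ) := by
            intro t ht
            rw [Finset.mem_range] at ht
            rw [← hcast t (by omega)]
            exact IH a' ha' hgcd' _ (hM t (by omega))
          calc ∑ t ∈ Finset.range (T+1), (c - (a (m+2):ℚ)*t)^m /
                ((Nat.factorial m : ℚ) * ∏ i ∈ Finset.Icc 1 (m+1), (a' i : ℚ))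
              ≤ ∑ t ∈ Finset.range (T+1), (D a' (m+1) (m0 - a (m+2)*t) : ℚ) :=
                Finset.sum_le_sum h1
            _ = ((∑ t ∈ Finset.range (T+1), D a' (m+1) (m0 - a (m+2)*t) : ℕ) : ℚ) := by
                push_cast; rfl
            _ ≤ (D a (m+1+1) n : ℚ) := by exact_mod_cast step1
        -- telescoping bound
        have htele : c ^ (m+1) / (((m+1:ℕ) : ℚ) * (a (m+2):ℚ))
            ≤ ∑ t ∈ Finset.range (T+1), (c - (a (m+2):ℚ)*t)^m := by
          have h0 : ∀ t : ℕ, t ≤ T → 0 ≤ c - (a (m+2):ℚ)*t := by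
            intro t ht
            rw [← hcast t ht]
            have h := hM t ht
            have h2 : ((sMinus a' (m+1) : ℤ) : ℚ) ≤ (((m0 - a (m+2)*t : ℕ) : ℤ) : ℚ) := by
              exact_mod_cast h
            push_cast at h2 ⊢
            linarith
          have hTb : c - (a (m+2):ℚ) * ((T:ℚ)+1) ≤ 0 := by
            have hN : m0 - σ < a (m+2) * (T+1) := by
              have e : a (m+2) * (T+1) = a (m+2)*T + a (m+2) := by ring
              omega
            have hZ : (m0:ℤ) - sMinus a' (m+1) - (a (m+2):ℤ)*((T:ℤ)+1) ≤ 0 := by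
              have e : (a (m+2):ℤ) * ((T:ℤ)+1) = ((a (m+2) * (T+1) : ℕ) : ℤ) := by push_cast; ring
              omega
            have : ((( (m0:ℤ) - sMinus a' (m+1) - (a (m+2):ℤ)*((T:ℤ)+1)) : ℤ) : ℚ) ≤ 0 := by
              exact_mod_cast hZ
            push_cast at this
            rw [hc_def]
            linarith
          exact tele (m+1) (a (m+2)) (by omega) hb1 c T h0 hTb
        -- final comparison of the two rational quantities
        have hns0 : (0:ℚ) ≤ (n:ℚ) - (sMinus a (m+1+1) : ℚ) := by
          have : ((sMinus a (m+1+1) : ℤ) : ℚ) ≤ ((n:ℤ):ℚ) := by exact_mod_cast hn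
          push_cast at this
          linarith
        have hnsdc : (n:ℚ) - (sMinus a (m+1+1) : ℚ) ≤ (d:ℚ) * c := by
          have hZ : (n:ℤ) - sMinus a (m+1+1) ≤ (d:ℤ) * ((m0:ℤ) - sMinus a' (m+1)) := by
            rw [hsk1]
            have e0 : (n:ℤ) = (a (m+2):ℤ)*(x0:ℤ) + (d:ℤ)*(m0:ℤ) := by exact_mod_cast hm0.symm
            have e1 : (a (m+2):ℤ)*(x0:ℤ) ≤ (a (m+2):ℤ)*((d:ℤ)-1) := by
              have : (x0:ℤ) ≤ (d:ℤ)-1 := by omega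
              exact mul_le_mul_of_nonneg_left this (by positivity)
            nlinarith
          have : (((n:ℤ) - sMinus a (m+1+1) : ℤ) : ℚ)
              ≤ (((d:ℤ) * ((m0:ℤ) - sMinus a' (m+1)) : ℤ) : ℚ) := by exact_mod_cast hZ
          push_cast at this
          rw [hc_def]
          linarith
        have hprod_split : ∏ i ∈ Finset.Icc 1 (m+1+1), (a i:ℚ)
            = (a (m+2):ℚ) * ∏ i ∈ Finset.Icc 1 (m+1), (a i : ℚ) := by
          rw [icc_succ (m+1), Finset.prod_insert (by simp [Finset.mem_Icc])]
        have hprod_scale : ∏ i ∈ Finset.Icc 1 (m+1), (a i:ℚ)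
            = (d:ℚ)^(m+1) * ∏ i ∈ Finset.Icc 1 (m+1), (a' i:ℚ) := by
          have h1 : ∏ i ∈ Finset.Icc 1 (m+1), (a i : ℚ)
              = ∏ i ∈ Finset.Icc 1 (m+1), ((d:ℚ) * (a' i:ℚ)) := by
            refine Finset.prod_congr rfl fun i hi => ?_
            rw [Finset.mem_Icc] at hi
            rw [hsc i hi.1 hi.2]
            push_cast
            ring
          rw [h1, Finset.prod_mul_distrib, Finset.prod_const, Nat.card_Icc]
          norm_num
        have hfact : (Nat.factorial (m+1) : ℚ) = ((m+1:ℕ):ℚ) * (Nat.factorial m : ℚ) := by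
          exact_mod_cast Nat.factorial_succ m
        have hb0 : (0:ℚ) < (a (m+2):ℚ) := by exact_mod_cast hb1
        have hd0 : (0:ℚ) < (d:ℚ) := by exact_mod_cast hd
        have hm1 : (0:ℚ) < ((m+1:ℕ):ℚ) := by positivity
        have heq : ((d:ℚ)*c)^(m+1) /
            ((Nat.factorial (m+1) : ℚ) * ∏ i ∈ Finset.Icc 1 (m+1+1), (a i : ℚ))
            = (c ^ (m+1) / (((m+1:ℕ) : ℚ) * (a (m+2):ℚ))) /
              ((Nat.factorial m : ℚ) * ∏ i ∈ Finset.Icc 1 (m+1), (a' i : ℚ)) := by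
          rw [hprod_split, hprod_scale, hfact, mul_pow]
          field_simp
        calc ((n : ℚ) - (sMinus a (m+1+1) : ℚ)) ^ (m+1+1 - 1) /
              ((Nat.factorial (m+1+1 - 1) : ℚ) * ∏ i ∈ Finset.Icc 1 (m+1+1), (a i : ℚ))
            ≤ ((d:ℚ)*c)^(m+1) /
              ((Nat.factorial (m+1) : ℚ) * ∏ i ∈ Finset.Icc 1 (m+1+1), (a i : ℚ)) := by
              show ((n : ℚ) - (sMinus a (m+1+1) : ℚ)) ^ (m+1) /
                ((Nat.factorial (m+1) : ℚ) * ∏ i ∈ Finset.Icc 1 (m+1+1), (a i : ℚ)) ≤ _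
              gcongr
          _ = (c ^ (m+1) / (((m+1:ℕ) : ℚ) * (a (m+2):ℚ))) /
              ((Nat.factorial m : ℚ) * ∏ i ∈ Finset.Icc 1 (m+1), (a' i : ℚ)) := heq
          _ ≤ (∑ t ∈ Finset.range (T+1), (c - (a (m+2):ℚ)*t)^m) /
              ((Nat.factorial m : ℚ) * ∏ i ∈ Finset.Icc 1 (m+1), (a' i : ℚ)) := by
              gcongr
          _ ≤ (D a (m+1+1) n : ℚ) := chain1
      · -- degenerate subcase: m0 < σ
        apply degenerate
        have hm0s : (m0:ℤ) ≤ sMinus a' (m+1) := by omega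
        rw [hsk1]
        have e0 : (n:ℤ) = (a (m+2):ℤ)*(x0:ℤ) + (d:ℤ)*(m0:ℤ) := by exact_mod_cast hm0.symm
        have e1 : (a (m+2):ℤ)*(x0:ℤ) ≤ (a (m+2):ℤ)*((d:ℤ)-1) := by
          have : (x0:ℤ) ≤ (d:ℤ)-1 := by omega
          exact mul_le_mul_of_nonneg_left this (by positivity)
        have e2 : (d:ℤ)*(m0:ℤ) ≤ (d:ℤ)*(sMinus a' (m+1)) :=
          mul_le_mul_of_nonneg_left hm0s (by positivity)
        nlinarith
    · -- degenerate case: n < b * x0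
      apply degenerate
      have hnle : n ≤ a (m+2) * x0 := by omega
      have h1 : d ∣ a (m+2) * x0 - n := (Nat.modEq_iff_dvd' hnle).mp hcong.symm
      have h2 : d ≤ a (m+2) * x0 - n := Nat.le_of_dvd (by omega) h1
      have hZ : (n:ℤ) ≤ (a (m+2):ℤ)*(x0:ℤ) - (d:ℤ) := by omega
      rw [hsk1]
      have e1 : (a (m+2):ℤ)*(x0:ℤ) ≤ (a (m+2):ℤ)*((d:ℤ)-1) := by
        have : (x0:ℤ) ≤ (d:ℤ)-1 := by omega
        exact mul_le_mul_of_nonneg_left this (by positivity)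
      have e2 : -(d:ℤ) ≤ (d:ℤ)*(sMinus a' (m+1)) := by nlinarith
      linarith


/-- Inequality A, lower bound. -/
theorem inequality_A_lower (a : ℕ → ℕ) (ha : ∀ i, 1 ≤ a i) (k : ℕ) (hk : 2 ≤ k)
    (hgcd : gcdUpTo a k = 1) (n : ℕ) (hn : sMinus a k ≤ (n : ℤ)) :
    ((n : ℚ) - (sMinus a k : ℚ)) ^ (k - 1) /
      ((Nat.factorial (k - 1) : ℚ) * ∏ i ∈ Finset.Icc 1 k, (a i : ℚ)) ≤ (D a k n : ℚ) := by
  exact main_aux k (by omega) a ha hgcd n hn
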